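/- Let J be the ideal of ℚ[Λ] generated by {1 − e^α : α ∈ Φ⁺}. Then for all integers m ≥ k ≥ 0, every f ∈ J^m, every w ∈ W with ℓ(w) = k, and every reduced word for w, one has L_w(f) ∈ J^{m−k}. -/

import Mathlib

/- Context: a reduced crystallographic root system `Φ` spanning a finite-dimensional
`ℚ`-vector space `V`, with Weyl group `W` (a Coxeter system whose simple reflections
are indexed by the base `Δ` of simple roots), positive roots `Φ⁺`, weight lattice
`Λ = {λ ∈ V : ⟨λ, α^∨⟩ ∈ ℤ for all α ∈ Φ}`, and `ρ = (1/2)·Σ_{α ∈ Φ⁺} α`.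
`ℚ[Λ]` is the group algebra of `Λ` over `ℚ` with basis `e^λ`, on which `W` acts by ring
automorphisms via `w · e^λ = e^{w(λ)}`.  For a simple root `α`, the Demazure operator
`L_{s_α}` is the unique `ℚ`-linear map with `(1 - e^α) · L_{s_α}(f) = f - s_α · f`, and for
a reduced word `w = s_{α₁} ⋯ s_{α_k}` we set `L_w = L_{s_{α₁}} ∘ ⋯ ∘ L_{s_{α_k}}`. -/

/-- All the data of the context: the root system, the simple/positive roots, `ρ`, the
weight lattice `Λ`, and the Weyl group `W` with its Coxeter structure and its action
on `V` (where the simple reflection indexed by `b : B` acts as the reflection attached to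
the simple root `idx b`). -/
structure RootCtx (V : Type) [AddCommGroup V] [Module ℚ V]
    (B : Type) (W : Type) [Group W] (M : CoxeterMatrix B) where
  finV : FiniteDimensional ℚ V
  /-- the finite set of roots -/
  Φ : Finset V
  span_eq_top : Submodule.span ℚ (Φ : Set V) = ⊤
  /-- `coroot α` is the linear functional `⟨·, α^∨⟩` -/
  coroot : V → V →ₗ[ℚ] ℚ
  coroot_self : ∀ α ∈ Φ, coroot α α = 2
  crystallographic : ∀ α ∈ Φ, ∀ β ∈ Φ, ∃ n : ℤ, (n : ℚ) = coroot α β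
  /-- the root system is reduced -/
  reduced : ∀ α ∈ Φ, ∀ c : ℚ, c • α ∈ Φ → c = 1 ∨ c = -1
  reflect_root_mem : ∀ α ∈ Φ, ∀ β ∈ Φ, β - coroot α β • α ∈ Φ
  /-- the base of simple roots -/
  Δ : Finset V
  Δ_sub : Δ ⊆ Φ
  Δ_indep : LinearIndependent ℚ (fun β : {x // x ∈ Δ} => (β : V))
  /-- the set of positive roots -/
  Φpos : Finset V
  Φpos_sub : Φpos ⊆ Φ
  mem_Φpos : ∀ α ∈ Φ, (α ∈ Φpos ↔
    ∃ c : V → ℚ, (∀ β ∈ Δ, 0 ≤ c β) ∧ α = ∑ β ∈ Δ, c β • β)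
  pos_or_neg : ∀ α ∈ Φ, α ∈ Φpos ∨ -α ∈ Φpos
  /-- the half-sum of the positive roots -/
  ρ : V
  ρ_def : (2 : ℚ) • ρ = ∑ α ∈ Φpos, α
  /-- the weight lattice -/
  Λ : AddSubgroup V
  mem_Λ : ∀ x : V, x ∈ Λ ↔ ∀ α ∈ Φ, ∃ n : ℤ, (n : ℚ) = coroot α x
  ρ_mem : ρ ∈ Λ
  root_mem : ∀ α ∈ Φ, α ∈ Λ
  /-- the Weyl group `W` as a Coxeter system, whose simple reflections are the reflections
  in the simple roots -/
  cs : CoxeterSystem M W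
  /-- the indexing of the simple roots by `B` -/
  idx : B ≃ {α // α ∈ Δ}
  /-- the (faithful) action of the Weyl group on `V` -/
  act : W →* (V ≃ₗ[ℚ] V)
  act_faithful : Function.Injective act
  act_simple : ∀ (b : B) (x : V),
    act (cs.simple b) x = x - coroot (idx b : V) x • (idx b : V)
  act_mem : ∀ (w : W), ∀ x ∈ Λ, act w x ∈ Λ

namespace RootCtx

variable {V B W : Type} [AddCommGroup V] [Module ℚ V] [Group W] {M : CoxeterMatrix B}
variable (ctx : RootCtx V B W M)

/-- The group algebra `ℚ[Λ]`. -/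
abbrev QΛ : Type := AddMonoidAlgebra ℚ ↥ctx.Λ

/-- The basis element `e^λ` of `ℚ[Λ]`. -/
noncomputable def e (lam : ↥ctx.Λ) : ctx.QΛ := AddMonoidAlgebra.of' ℚ ↥ctx.Λ lam

/-- `ρ` as an element of the weight lattice. -/
def ρΛ : ↥ctx.Λ := ⟨ctx.ρ, ctx.ρ_mem⟩

/-- The simple root indexed by `b`, as an element of the weight lattice. -/
def simpleRoot (b : B) : ↥ctx.Λ :=
  ⟨(ctx.idx b : V), ctx.root_mem _ (ctx.Δ_sub (ctx.idx b).2)⟩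

/-- The action of `w ∈ W` on the weight lattice `Λ`. -/
noncomputable def actΛ (w : W) : ↥ctx.Λ ≃+ ↥ctx.Λ where
  toFun x := ⟨ctx.act w x, ctx.act_mem w x x.2⟩
  invFun x := ⟨ctx.act w⁻¹ x, ctx.act_mem w⁻¹ x x.2⟩
  left_inv x := by
    ext
    show (ctx.act w⁻¹ * ctx.act w) (x : V) = (x : V)
    rw [← map_mul, inv_mul_cancel, map_one]
    rfl
  right_inv x := by
    ext
    show (ctx.act w * ctx.act w⁻¹) (x : V) = (x : V)
    rw [← map_mul, mul_inv_cancel, map_one]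
    rfl
  map_add' x y := by
    ext
    show ctx.act w (↑x + ↑y) = ctx.act w x + ctx.act w y
    exact map_add _ _ _

/-- The action of `w ∈ W` on `ℚ[Λ]` by `ℚ`-algebra (in particular ring) automorphisms,
with `w · e^λ = e^{w(λ)}`. -/
noncomputable def wact (w : W) : ctx.QΛ ≃ₐ[ℚ] ctx.QΛ :=
  AddMonoidAlgebra.domCongr ℚ ℚ (ctx.actΛ w)

/-- The augmentation `ε : ℚ[Λ] → ℚ`, the `ℚ`-algebra homomorphism with `ε(e^λ) = 1`. -/
noncomputable def eps : ctx.QΛ →ₐ[ℚ] ℚ := AddMonoidAlgebra.lift ℚ ℚ ↥ctx.Λ 1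

/-- `L` is *the* Demazure operator `L_{s_α}` attached to the simple root `α = idx b`:
the unique `ℚ`-linear endomorphism of `ℚ[Λ]` satisfying
`(1 - e^α) * L f = f - s_α · f` for all `f`. -/
def IsDemazure (b : B) (L : ctx.QΛ →ₗ[ℚ] ctx.QΛ) : Prop :=
  ∀ f : ctx.QΛ, (1 - ctx.e (ctx.simpleRoot b)) * L f = f - ctx.wact (ctx.cs.simple b) f

/-- Given a family `L` of Demazure operators indexed by the simple roots,
`Lword L [α₁, …, α_k] = L_{s_{α₁}} ∘ ⋯ ∘ L_{s_{α_k}}`; applied to reduced words it yields the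
operators `L_w`. -/
noncomputable def Lword (L : B → ctx.QΛ →ₗ[ℚ] ctx.QΛ) (ω : List B) :
    ctx.QΛ →ₗ[ℚ] ctx.QΛ :=
  ω.foldr (fun b g => (L b).comp g) LinearMap.id

/-- The Bruhat order on `W`: `v ≤ w` iff some (equivalently, every) reduced word for `w`
contains a subword which is a reduced word for `v`. -/
def BruhatLE (v w : W) : Prop :=
  ∃ ω : List B, ctx.cs.IsReduced ω ∧ ctx.cs.wordProd ω = w ∧
    ∃ ω' : List B, ω'.Sublist ω ∧ ctx.cs.IsReduced ω' ∧ ctx.cs.wordProd ω' = v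

end RootCtx

/-- The ideal `J` of `ℚ[Λ]` generated by `{1 − e^α : α ∈ Φ⁺}`. -/
noncomputable def RootCtx.posIdeal {V B W : Type} [AddCommGroup V] [Module ℚ V] [Group W]
    {M : CoxeterMatrix B} (ctx : RootCtx V B W M) : Ideal ctx.QΛ :=
  Ideal.span {x : ctx.QΛ | ∃ α : V, ∃ hα : α ∈ ctx.Φpos,
    x = 1 - ctx.e ⟨α, ctx.root_mem α (ctx.Φpos_sub hα)⟩}

/-! Each `L_{s_α}` is a twisted derivation, `L(fg) = L(f) g + s_α(f) L(g)`, and `s_α` preserves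
`J` because it permutes the roots while `1 - e^{-γ} = -e^{-γ}(1 - e^γ)`. Hence a single
Demazure operator lowers the `J`-adic order by at most one, and `L_w` for a reduced word of
length `k` by at most `k`. -/

section TwistedDerivation

variable {R : Type*} [CommRing R]

theorem twisted_leibniz_of_mul_eq_sub_map {c : R} (hc : IsLeftRegular c) (σ : R →+* R)
    {D : R → R} (hD : ∀ f, c * D f = f - σ f) (f g : R) :
    D (f * g) = D f * g + σ f * D g := by
  apply hc
  calc c * D (f * g) = f * g - σ f * σ g := by rw [hD, map_mul]
    _ = (c * D f) * g + σ f * (c * D g) := by rw [hD, hD]; ring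
    _ = c * (D f * g + σ f * D g) := by ring

theorem apply_mem_pow_pred_of_leibniz {I : Ideal R} {σ : R →+* R} (hσ : I.map σ ≤ I)
    {D : R →+ R} (hD : ∀ f g, D (f * g) = D f * g + σ f * D g) :
    ∀ {m : ℕ} {f : R}, f ∈ I ^ m → D f ∈ I ^ (m - 1)
  | 0, _, _ | 1, _, _ => by simp
  | m + 2, f, hf => by
    have hσ_pow : ∀ x ∈ I ^ (m + 1), σ x ∈ I ^ (m + 1) := fun x hx =>
      Ideal.pow_right_mono hσ _ (Ideal.map_pow σ I _ ▸ Ideal.mem_map_of_mem σ hx)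
    rw [pow_succ] at hf
    refine Submodule.mul_induction_on hf (fun x hx y hy => ?_) (fun x y hx hy => ?_)
    · rw [hD]
      refine add_mem ?_ (Ideal.mul_mem_right _ _ (hσ_pow x hx))
      exact pow_succ I m ▸ Ideal.mul_mem_mul (apply_mem_pow_pred_of_leibniz hσ hD hx) hy
    · rw [map_add]
      exact add_mem hx hy

end TwistedDerivation

-- Makes `ℚ[Λ]` a domain, so that `1 - e^α` can be cancelled.
instance AddSubgroup.uniqueSums {V : Type*} [AddCommGroup V] [Module ℚ V] (G : AddSubgroup V) :
    UniqueSums G :=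
  UniqueSums.of_injective_addHom G.subtype.toAddHom Subtype.coe_injective inferInstance

namespace RootCtx

variable {V B W : Type} [AddCommGroup V] [Module ℚ V] [Group W] {M : CoxeterMatrix B}
variable (ctx : RootCtx V B W M)

theorem e_add (a b : ctx.Λ) : ctx.e (a + b) = ctx.e a * ctx.e b := by
  simp [e, AddMonoidAlgebra.single_mul_single]

theorem e_zero : ctx.e 0 = 1 := rfl

theorem wact_e (w : W) (lam : ctx.Λ) : ctx.wact w (ctx.e lam) = ctx.e (ctx.actΛ w lam) := by
  simp [wact, e]

theorem simpleRoot_ne_zero (b : B) : ctx.simpleRoot b ≠ 0 := by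
  intro h
  have h2 := ctx.coroot_self _ (ctx.Δ_sub (ctx.idx b).2)
  rw [show (ctx.idx b : V) = 0 from congrArg Subtype.val h] at h2
  simp at h2

theorem one_sub_e_simpleRoot_ne_zero (b : B) : (1 : ctx.QΛ) - ctx.e (ctx.simpleRoot b) ≠ 0 := by
  rw [sub_ne_zero, ← e_zero, Ne, e, e, AddMonoidAlgebra.of'_apply, AddMonoidAlgebra.of'_apply,
    AddMonoidAlgebra.single_left_inj one_ne_zero]
  exact (ctx.simpleRoot_ne_zero b).symm

theorem one_sub_e_mem_posIdeal {γ : V} (hγ : γ ∈ ctx.Φ) :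
    1 - ctx.e ⟨γ, ctx.root_mem γ hγ⟩ ∈ ctx.posIdeal := by
  rcases ctx.pos_or_neg γ hγ with hpos | hneg
  · exact Ideal.subset_span ⟨γ, hpos, rfl⟩
  · have hsum : (⟨γ, ctx.root_mem γ hγ⟩ + ⟨-γ, ctx.root_mem _ (ctx.Φpos_sub hneg)⟩ : ctx.Λ) = 0 :=
      Subtype.ext (add_neg_cancel γ)
    have hfactor : 1 - ctx.e ⟨γ, ctx.root_mem γ hγ⟩ = -ctx.e ⟨γ, ctx.root_mem γ hγ⟩ *
        (1 - ctx.e ⟨-γ, ctx.root_mem _ (ctx.Φpos_sub hneg)⟩) := by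
      rw [mul_sub, mul_one, neg_mul, ← e_add, hsum, e_zero]
      ring
    rw [hfactor]
    exact Ideal.mul_mem_left _ _ (Ideal.subset_span ⟨-γ, hneg, rfl⟩)

theorem map_wact_simple_posIdeal_le (b : B) :
    ctx.posIdeal.map (ctx.wact (ctx.cs.simple b)) ≤ ctx.posIdeal := by
  rw [posIdeal, Ideal.map_span, Ideal.span_le]
  rintro _ ⟨_, ⟨β, hβ, rfl⟩, rfl⟩
  have hβΦ := ctx.Φpos_sub hβ
  have hreflΦ := ctx.reflect_root_mem _ (ctx.Δ_sub (ctx.idx b).2) β hβΦ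
  have hrefl : ctx.actΛ (ctx.cs.simple b) ⟨β, ctx.root_mem β hβΦ⟩
      = ⟨_, ctx.root_mem _ hreflΦ⟩ := Subtype.ext (ctx.act_simple b β)
  rw [map_sub, map_one, wact_e, hrefl]
  exact ctx.one_sub_e_mem_posIdeal hreflΦ

variable {ctx}

theorem IsDemazure.leibniz {b : B} {Lb : ctx.QΛ →ₗ[ℚ] ctx.QΛ} (hLb : ctx.IsDemazure b Lb)
    (f g : ctx.QΛ) :
    Lb (f * g) = Lb f * g + ctx.wact (ctx.cs.simple b) f * Lb g :=
  twisted_leibniz_of_mul_eq_sub_map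
    (IsRegular.of_ne_zero (ctx.one_sub_e_simpleRoot_ne_zero b)).left
    (ctx.wact (ctx.cs.simple b)).toRingHom hLb f g

theorem IsDemazure.mem_posIdeal_pow_pred {b : B} {Lb : ctx.QΛ →ₗ[ℚ] ctx.QΛ}
    (hLb : ctx.IsDemazure b Lb) {m : ℕ} {f : ctx.QΛ} (hf : f ∈ ctx.posIdeal ^ m) :
    Lb f ∈ ctx.posIdeal ^ (m - 1) :=
  apply_mem_pow_pred_of_leibniz (D := Lb.toAddMonoidHom) (ctx.map_wact_simple_posIdeal_le b)
    hLb.leibniz hf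

theorem Lword_mem_posIdeal_pow_sub_length {L : B → ctx.QΛ →ₗ[ℚ] ctx.QΛ}
    (hL : ∀ b, ctx.IsDemazure b (L b)) (ω : List B) {m : ℕ} {f : ctx.QΛ}
    (hf : f ∈ ctx.posIdeal ^ m) : ctx.Lword L ω f ∈ ctx.posIdeal ^ (m - ω.length) := by
  induction ω with
  | nil => simpa [Lword] using hf
  | cons b ω ih =>
    rw [List.length_cons, ← Nat.sub_sub]
    exact (hL b).mem_posIdeal_pow_pred ih

end RootCtx

theorem stmt14_general {V B W : Type} [AddCommGroup V] [Module ℚ V] [Group W] {M : CoxeterMatrix B}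
    (ctx : RootCtx V B W M)
    (L : B → ctx.QΛ →ₗ[ℚ] ctx.QΛ) (hL : ∀ b : B, ctx.IsDemazure b (L b))
    (m k : ℕ) (f : ctx.QΛ) (hf : f ∈ ctx.posIdeal ^ m)
    (w : W) (hw : ctx.cs.length w = k) :
    ∀ ω : List B, ctx.cs.IsReduced ω → ctx.cs.wordProd ω = w →
      ctx.Lword L ω f ∈ ctx.posIdeal ^ (m - k) := by
  intro ω hred hprod
  have hlen : ω.length = k := by rw [← hw, ← hprod, hred]
  exact hlen ▸ ctx.Lword_mem_posIdeal_pow_sub_length hL ω hf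

/-- for all `m ≥ k ≥ 0`, every `f ∈ J^m` and every `w ∈ W` with `ℓ(w) = k`,
one has `L_w(f) ∈ J^{m−k}` for every reduced word for `w`. -/
theorem stmt14 {V B W : Type} [AddCommGroup V] [Module ℚ V] [Group W] {M : CoxeterMatrix B}
    (ctx : RootCtx V B W M)
    (L : B → ctx.QΛ →ₗ[ℚ] ctx.QΛ) (hL : ∀ b : B, ctx.IsDemazure b (L b))
    (m k : ℕ) (hkm : k ≤ m) (f : ctx.QΛ) (hf : f ∈ ctx.posIdeal ^ m)
    (w : W) (hw : ctx.cs.length w = k) :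
    ∀ ω : List B, ctx.cs.IsReduced ω → ctx.cs.wordProd ω = w →
      ctx.Lword L ω f ∈ ctx.posIdeal ^ (m - k) :=
  stmt14_general ctx L hL m k f hf w hw
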